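/- arXiv:2104.09160 — 8 statements merged into one kernel-verified Lean document; each statement's English description precedes it below -/
import Mathlib

section
/- Let G be a commutative semigroup, S a commutative group, n a positive integer, and A : G^n → S a symmetric n-additive function. Then for all x, y ∈ G, the n-th iterated difference Δ_y^n A*(x) equals n! · A*(y), where A*(x) = A(x,...,x) and Δ_y f(x) = f(x+y) − f(x). -/
/-- `A` is additive in each of its `n` variables. -/
def MultiAdd {F : Type*} [Add F] {S : Type*} [Add S] {n : ℕ} (A : (Fin n → F) → S) : Prop :=
  ∀ (i : Fin n) (x : Fin n → F) (u v : F),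
    A (Function.update x i (u + v)) = A (Function.update x i u) + A (Function.update x i v)

/-- `A` is invariant under permutations of its variables. -/
def SymmFun {F S : Type*} {n : ℕ} (A : (Fin n → F) → S) : Prop :=
  ∀ (σ : Equiv.Perm (Fin n)) (x : Fin n → F), A (x ∘ σ) = A x

section Aux

variable {G S : Type*} [AddCommSemigroup G] [AddCommGroup S] {n : ℕ}

/-- the forward difference operator -/
def dlt (y : G) : (G → S) → (G → S) := fun f => fun z => f (z + y) - f z

lemma dlt_sum (y : G) {ι : Type*} (s : Finset ι) (F : ι → G → S) :
    dlt y (fun z => ∑ j ∈ s, F j z) = fun z => ∑ j ∈ s, dlt y (F j) z := by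
  funext z; simp [dlt, Finset.sum_sub_distrib]

lemma dlt_smul (y : G) (c : ℕ) (f : G → S) :
    dlt y (fun z => c • f z) = fun z => c • dlt y f z := by
  funext z; simp [dlt, smul_sub]

lemma dlt_iter_sum (y : G) (m : ℕ) {ι : Type*} (s : Finset ι) (c : ι → ℕ) (F : ι → G → S) :
    (dlt y)^[m] (fun z => ∑ j ∈ s, c j • F j z)
      = fun z => ∑ j ∈ s, c j • (dlt y)^[m] (F j) z := by
  induction m generalizing F with
  | zero => simp
  | succ m ih =>
    rw [Function.iterate_succ_apply]
    have h1 : dlt y (fun z => ∑ j ∈ s, c j • F j z)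
        = fun z => ∑ j ∈ s, c j • (dlt y (F j)) z := by
      rw [dlt_sum]
      funext z
      refine Finset.sum_congr rfl fun j _ => ?_
      exact congrFun (dlt_smul y (c j) (F j)) z
    rw [h1, ih]
    funext z
    refine Finset.sum_congr rfl fun j _ => ?_
    rw [← Function.iterate_succ_apply]

lemma dlt_const (y : G) (c : S) : dlt y (fun _ => c) = fun _ => 0 := by
  funext z; simp [dlt]

lemma dlt_iter_const (y : G) (m : ℕ) (c : S) :
    (dlt y)^[m + 1] (fun _ => c) = fun _ => 0 := by
  rw [Function.iterate_succ_apply, dlt_const]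
  exact Function.iterate_fixed (dlt_const y 0) m

lemma card_filter_lt (k : ℕ) (h : k ≤ n) :
    (Finset.univ.filter (fun i : Fin n => (i : ℕ) < k)).card = k := by
  rw [← Finset.card_image_of_injective _ Fin.val_injective]
  have himg : (Finset.univ.filter (fun i : Fin n => (i : ℕ) < k)).image Fin.val
      = Finset.range k := by
    ext m
    simp only [Finset.mem_image, Finset.mem_filter, Finset.mem_univ, true_and, Finset.mem_range]
    constructor
    · rintro ⟨i, hi, rfl⟩; exact hi
    · intro hm; exact ⟨⟨m, lt_of_lt_of_le hm h⟩, hm, rfl⟩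
  rw [himg, Finset.card_range]

lemma expand (A : (Fin n → G) → S) (haddA : MultiAdd A) (z y : G)
    (U : Finset (Fin n)) (w : Fin n → G) :
    A (fun i => if i ∈ U then z + y else w i)
      = ∑ T ∈ U.powerset, A (fun i => if i ∈ T then y else if i ∈ U then z else w i) := by
  classical
  induction U using Finset.induction generalizing w with
  | empty => simp
  | @insert a s ha ih =>
    have h1 : (fun i => if i ∈ insert a s then z + y else w i)
        = Function.update (fun i => if i ∈ s then z + y else w i) a (z + y) := by
      funext i
      rcases eq_or_ne i a with rfl | hne
      · simp
      · simp [Function.update_of_ne hne, Finset.mem_insert, hne]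
    have h2 : Function.update (fun i => if i ∈ s then z + y else w i) a z
        = fun i => if i ∈ s then z + y else (Function.update w a z) i := by
      funext i
      rcases eq_or_ne i a with rfl | hne
      · simp [ha]
      · simp [Function.update_of_ne hne]
    have h3 : Function.update (fun i => if i ∈ s then z + y else w i) a y
        = fun i => if i ∈ s then z + y else (Function.update w a y) i := by
      funext i
      rcases eq_or_ne i a with rfl | hne
      · simp [ha]
      · simp [Function.update_of_ne hne]
    rw [h1, haddA a _ z y, h2, h3, ih (Function.update w a z), ih (Function.update w a y)]
    have h4 : ∀ T ∈ s.powerset,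
        A (fun i => if i ∈ T then y else if i ∈ s then z else Function.update w a z i)
          = A (fun i => if i ∈ T then y else if i ∈ insert a s then z else w i) := by
      intro T hT
      have haT : a ∉ T := fun h => ha (Finset.mem_powerset.mp hT h)
      congr 1
      funext i
      rcases eq_or_ne i a with rfl | hne
      · simp [haT, ha]
      · simp [Function.update_of_ne hne, Finset.mem_insert, hne]
    have h5 : ∀ T ∈ s.powerset,
        A (fun i => if i ∈ T then y else if i ∈ s then z else Function.update w a y i)
          = A (fun i => if i ∈ insert a T then y else if i ∈ insert a s then z else w i) := by
      intro T hT
      have haT : a ∉ T := fun h => ha (Finset.mem_powerset.mp hT h)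
      congr 1
      funext i
      rcases eq_or_ne i a with rfl | hne
      · simp [haT, ha]
      · simp [Function.update_of_ne hne, Finset.mem_insert, hne]
    rw [Finset.sum_congr rfl h4, Finset.sum_congr rfl h5]
    exact (Finset.sum_powerset_insert ha _).symm

lemma swap_card (A : (Fin n → G) → S) (hsymm : SymmFun A) (y z : G)
    (T U : Finset (Fin n)) (h : T.card = U.card) :
    A (fun i => if i ∈ T then y else z) = A (fun i => if i ∈ U then y else z) := by
  classical
  let e := Finset.equivOfCardEq h
  have hs := hsymm (Equiv.extendSubtype e) (fun i => if i ∈ U then y else z)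
  rw [← hs]
  congr 1
  funext i
  by_cases hi : i ∈ T
  · simp [Function.comp, hi, Equiv.extendSubtype_mem e i hi]
  · simp [Function.comp, hi, Equiv.extendSubtype_not_mem e i hi]

/-- `A` applied with `y` in the first `k` slots and `z` in the others -/
def Dfn (A : (Fin n → G) → S) (y : G) (k : ℕ) : G → S :=
  fun z => A (fun i => if (i : ℕ) < k then y else z)

lemma Dstep (A : (Fin n → G) → S) (haddA : MultiAdd A) (hsymm : SymmFun A) (y : G)
    (k : ℕ) (hk : k ≤ n) (z : G) :
    Dfn A y k (z + y)
      = ∑ j ∈ Finset.range (n - k + 1), (n - k).choose j • Dfn A y (k + j) z := by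
  classical
  set U : Finset (Fin n) := Finset.univ.filter (fun i => ¬ (i : ℕ) < k) with hU
  have hf : (Finset.univ.filter (fun i : Fin n => (i : ℕ) < k)).card = k := card_filter_lt k hk
  have hsum := Finset.card_filter_add_card_filter_not
    (s := (Finset.univ : Finset (Fin n))) (p := fun i : Fin n => (i : ℕ) < k)
  have hcardU : U.card = n - k := by
    rw [hU]
    simp only [Finset.card_univ, Fintype.card_fin] at hsum
    omega
  have hL : Dfn A y k (z + y) = A (fun i => if i ∈ U then z + y else (fun _ => y) i) := by
    unfold Dfn
    congr 1
    funext i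
    by_cases hi : (i : ℕ) < k
    · simp [hU, hi, Nat.not_le.mpr hi]
    · simp [hU, hi, Nat.le_of_not_lt hi]
  rw [hL, expand A haddA z y U (fun _ => y), Finset.sum_powerset, hcardU]
  refine Finset.sum_congr rfl fun j hj => ?_
  have hj' : j ≤ n - k := Nat.lt_succ_iff.mp (Finset.mem_range.mp hj)
  have hterm : ∀ T ∈ Finset.powersetCard j U,
      A (fun i => if i ∈ T then y else if i ∈ U then z else (fun _ : Fin n => y) i)
        = Dfn A y (k + j) z := by
    intro T hT
    obtain ⟨hTU, hTcard⟩ := Finset.mem_powersetCard.mp hT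
    have hform : (fun i => if i ∈ T then y else if i ∈ U then z else (fun _ : Fin n => y) i)
        = fun i : Fin n => if i ∈ T ∪ Uᶜ then y else z := by
      funext i
      by_cases h1 : i ∈ T
      · simp [h1, Finset.mem_union]
      · by_cases h2 : i ∈ U <;>
          simp [h1, h2, Finset.mem_union, Finset.mem_compl]
    have hdisj : Disjoint T Uᶜ :=
      Finset.disjoint_of_subset_left hTU disjoint_compl_right
    have hcard : (T ∪ Uᶜ).card = k + j := by
      rw [Finset.card_union_of_disjoint hdisj, hTcard, Finset.card_compl, Fintype.card_fin,
        hcardU]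
      omega
    have hform2 : Dfn A y (k + j) z
        = A (fun i : Fin n =>
            if i ∈ Finset.univ.filter (fun i : Fin n => (i : ℕ) < k + j) then y else z) := by
      unfold Dfn
      congr 1
      funext i
      by_cases hi : (i : ℕ) < k + j <;> simp [hi]
    rw [hform, hform2]
    refine swap_card A hsymm y z _ _ ?_
    rw [hcard, card_filter_lt (k + j) (by omega)]
  calc ∑ T ∈ Finset.powersetCard j U,
        A (fun i => if i ∈ T then y else if i ∈ U then z else (fun _ : Fin n => y) i)
      = ∑ _T ∈ Finset.powersetCard j U, Dfn A y (k + j) z := Finset.sum_congr rfl hterm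
    _ = (Finset.powersetCard j U).card • Dfn A y (k + j) z := Finset.sum_const _
    _ = (n - k).choose j • Dfn A y (k + j) z := by
        rw [Finset.card_powersetCard, hcardU]

lemma Ddlt (A : (Fin n → G) → S) (haddA : MultiAdd A) (hsymm : SymmFun A) (y : G)
    (k : ℕ) (hk : k ≤ n) :
    dlt y (Dfn A y k)
      = fun z => ∑ j ∈ Finset.range (n - k), (n - k).choose (j + 1) • Dfn A y (k + (j + 1)) z := by
  funext z
  have h := Dstep A haddA hsymm y k hk z
  rw [Finset.sum_range_succ'] at h
  simp only [Nat.choose_zero_right, one_smul, Nat.add_zero] at h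
  simp only [dlt, h, add_sub_cancel_right]

lemma dlt_iter_D (A : (Fin n → G) → S) (haddA : MultiAdd A) (hsymm : SymmFun A) (y : G)
    (m k : ℕ) (hk : k ≤ n) :
    (dlt y)^[m + 1] (Dfn A y k)
      = fun z => ∑ j ∈ Finset.range (n - k),
          (n - k).choose (j + 1) • (dlt y)^[m] (Dfn A y (k + (j + 1))) z := by
  rw [Function.iterate_succ_apply, Ddlt A haddA hsymm y k hk]
  exact dlt_iter_sum y m _ _ _

lemma Dvanish (A : (Fin n → G) → S) (haddA : MultiAdd A) (hsymm : SymmFun A) (y : G)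
    (m k : ℕ) (hm : 1 ≤ m) (hnk : n < k + m) :
    (dlt y)^[m] (Dfn A y k) = fun _ => 0 := by
  induction m generalizing k with
  | zero => omega
  | succ m ih =>
    by_cases hkn : n ≤ k
    · have hc : Dfn A y k = fun _ => A (fun _ => y) := by
        funext z
        unfold Dfn
        congr 1
        funext i
        simp [lt_of_lt_of_le i.isLt hkn]
      rw [hc]
      exact dlt_iter_const y m _
    · push_neg at hkn
      rw [dlt_iter_D A haddA hsymm y m k (le_of_lt hkn)]
      funext z
      refine Finset.sum_eq_zero fun j hj => ?_
      have hm1 : 1 ≤ m := by omega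
      rw [ih (k + (j + 1)) hm1 (by omega)]
      simp

lemma Dmain (A : (Fin n → G) → S) (haddA : MultiAdd A) (hsymm : SymmFun A) (y : G)
    (m k : ℕ) (hmk : k + m = n) :
    (dlt y)^[m] (Dfn A y k) = fun _ => m.factorial • A (fun _ => y) := by
  induction m generalizing k with
  | zero =>
    have hk : k = n := by omega
    subst hk
    funext z
    simp only [Function.iterate_zero, id, Nat.factorial_zero, one_smul]
    unfold Dfn
    congr 1
    funext i
    simp [i.isLt]
  | succ m ih =>
    rw [dlt_iter_D A haddA hsymm y m k (by omega)]
    have hnk : n - k = m + 1 := by omega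
    rw [hnk]
    funext z
    rw [Finset.sum_range_succ']
    have hzero : ∀ j ∈ Finset.range m,
        (m + 1).choose (j + 1 + 1) • (dlt y)^[m] (Dfn A y (k + (j + 1 + 1))) z = 0 := by
      intro j hj
      have hm1 : 1 ≤ m := by
        rcases Nat.eq_zero_or_pos m with rfl | h
        · simp at hj
        · exact h
      rw [Dvanish A haddA hsymm y m (k + (j + 1 + 1)) hm1 (by omega)]
      simp
    rw [Finset.sum_eq_zero hzero, zero_add, ih (k + (0 + 1)) (by omega)]
    simp only []
    simp only [zero_add, Nat.choose_one_right]
    rw [smul_smul, ← Nat.factorial_succ]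

end Aux

theorem stmt5 (G S : Type*) [AddCommSemigroup G] [AddCommGroup S] (n : ℕ) (hn : 0 < n)
    (A : (Fin n → G) → S) (haddA : MultiAdd A) (hsymm : SymmFun A) (x y : G) :
    (fun f : G → S => fun z => f (z + y) - f z)^[n] (fun z => A fun _ => z) x
      = n.factorial • A (fun _ => y) := by
  have h0 : (fun z => A fun _ => z) = Dfn A y 0 := by
    funext z
    unfold Dfn
    congr 1
  have hmain := Dmain A haddA hsymm y n 0 (by omega)
  show (dlt y)^[n] (fun z => A fun _ => z) x = n.factorial • A (fun _ => y)
  rw [h0, hmain]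
end

section
/- Let G be a commutative semigroup, S a commutative group, and n a positive integer such that multiplication by n! is injective in S. If A : G^n → S is a symmetric n-additive function whose diagonalization A*(x) = A(x,...,x) is identically zero, then A is identically zero. -/
section MonoidCase

variable {G S : Type*} [AddCommMonoid G] [AddCommGroup S] {n : ℕ}

lemma multiadd_update_zero {A : (Fin n → G) → S} (h : MultiAdd A) (x : Fin n → G) (i : Fin n) :
    A (Function.update x i 0) = 0 := by
  have := h i x 0 0
  rw [add_zero] at this
  exact (left_eq_add.mp this)

lemma multiadd_nsmul {A : (Fin n → G) → S} (h : MultiAdd A) (x : Fin n → G) (i : Fin n)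
    (k : ℕ) (u : G) :
    A (Function.update x i (k • u)) = k • A (Function.update x i u) := by
  induction k with
  | zero => simpa using multiadd_update_zero h x i
  | succ k ih => rw [succ_nsmul, h i x, ih, succ_nsmul]

/-- Bundle a multi-additive map as a `ℕ`-multilinear map. -/
def multiAddToML (A : (Fin n → G) → S) (hA : MultiAdd A) :
    MultilinearMap ℕ (fun _ : Fin n => G) S where
  toFun := A
  map_update_add' := fun {inst} m i x y => by
    have h : inst = instDecidableEqFin n := Subsingleton.elim _ _
    subst h
    exact hA i m x y
  map_update_smul' := fun {inst} m i c u => by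
    have h : inst = instDecidableEqFin n := Subsingleton.elim _ _
    subst h
    exact multiadd_nsmul hA m i c u

lemma neg_one_pow_sub {a b : ℕ} (h : b ≤ a) : (-1:ℤ)^(a-b) = (-1)^a * (-1)^b := by
  have h1 : (-1:ℤ)^(a-b) * (-1)^b = (-1)^a := by rw [← pow_add, Nat.sub_add_cancel h]
  have h2 : (-1:ℤ)^b * (-1)^b = 1 := by rw [← pow_add]; exact Even.neg_one_pow ⟨b, rfl⟩
  calc (-1:ℤ)^(a-b) = (-1)^(a-b) * ((-1)^b * (-1)^b) := by rw [h2, mul_one]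
    _ = ((-1)^(a-b) * (-1)^b) * (-1)^b := by ring
    _ = (-1)^a * (-1)^b := by rw [h1]

lemma coeff_sum (g : Fin n → Fin n) :
    (∑ T ∈ (Finset.univ : Finset (Fin n)).powerset.filter (fun T => ∀ i, g i ∈ T),
        (-1:ℤ)^(n - T.card)) = if Function.Bijective g then 1 else 0 := by
  classical
  set R : Finset (Fin n) := Finset.image g Finset.univ with hR
  have hmem : ∀ T : Finset (Fin n), ((∀ i, g i ∈ T) ↔ R ⊆ T) := by
    intro T
    constructor
    · intro h a ha
      rcases Finset.mem_image.mp ha with ⟨i, _, rfl⟩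
      exact h i
    · intro h i
      exact h (Finset.mem_image.mpr ⟨i, Finset.mem_univ i, rfl⟩)
  have hre : (∑ T ∈ (Finset.univ : Finset (Fin n)).powerset.filter (fun T => ∀ i, g i ∈ T),
      (-1:ℤ)^(n - T.card)) = ∑ U ∈ Rᶜ.powerset, (-1:ℤ)^(n - (R.card + U.card)) := by
    refine Finset.sum_nbij' (fun T => T \ R) (fun U => R ∪ U) ?_ ?_ ?_ ?_ ?_
    · intro T hT
      rw [Finset.mem_filter, hmem T] at hT
      rw [Finset.mem_powerset]
      intro a ha
      rw [Finset.mem_sdiff] at ha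
      exact Finset.mem_compl.mpr ha.2
    · intro U hU
      rw [Finset.mem_filter, hmem _]
      exact ⟨Finset.mem_powerset.mpr (Finset.subset_univ _), Finset.subset_union_left⟩
    · intro T hT
      rw [Finset.mem_filter, hmem T] at hT
      show R ∪ T \ R = T
      rw [Finset.union_comm]
      exact Finset.sdiff_union_of_subset hT.2
    · intro U hU
      rw [Finset.mem_powerset] at hU
      refine Finset.union_sdiff_cancel_left ?_
      rw [Finset.disjoint_left]
      intro a haR haU
      exact (Finset.mem_compl.mp (hU haU)) haR
    · intro T hT
      rw [Finset.mem_filter, hmem T] at hT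
      have : (T \ R).card + R.card = T.card := Finset.card_sdiff_add_card_eq_card hT.2
      show (-1:ℤ)^(n - T.card) = (-1:ℤ)^(n - (R.card + (T \ R).card))
      congr 1
      omega
  rw [hre]
  by_cases hsurj : Function.Bijective g
  · have hRuniv : R = Finset.univ := by
      apply Finset.eq_univ_of_forall
      intro a
      rcases hsurj.2 a with ⟨i, rfl⟩
      exact Finset.mem_image.mpr ⟨i, Finset.mem_univ i, rfl⟩
    have hcompl : Rᶜ = (∅ : Finset (Fin n)) := by rw [hRuniv, Finset.compl_univ]
    rw [hcompl, if_pos hsurj]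
    simp [hRuniv, Finset.card_univ]
  · have hRne : R ≠ Finset.univ := by
      intro hc
      apply hsurj
      rw [Fintype.bijective_iff_surjective_and_card]
      refine ⟨fun a => ?_, rfl⟩
      have : a ∈ R := hc ▸ Finset.mem_univ a
      rcases Finset.mem_image.mp this with ⟨i, _, rfl⟩
      exact ⟨i, rfl⟩
    have hcne : Rᶜ ≠ (∅ : Finset (Fin n)) := by
      intro hc
      apply hRne
      have := congrArg (·ᶜ) hc
      simpa using this
    rw [if_neg hsurj]
    have hRle : R.card ≤ n := by simpa using Finset.card_le_univ R
    have : ∀ U ∈ Rᶜ.powerset, (-1:ℤ)^(n - (R.card + U.card))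
        = (-1:ℤ)^(n - R.card) * (-1:ℤ)^U.card := by
      intro U hU
      rw [Finset.mem_powerset] at hU
      have hUle : U.card ≤ Rᶜ.card := Finset.card_le_card hU
      have hc : Rᶜ.card = n - R.card := by
        rw [Finset.card_compl]; simp
      rw [← Nat.sub_sub, neg_one_pow_sub (by omega)]
    rw [Finset.sum_congr rfl this, ← Finset.mul_sum, Finset.sum_powerset_neg_one_pow_card,
      if_neg hcne, mul_zero]

theorem monoid_case (A : (Fin n → G) → S) (haddA : MultiAdd A) (hsymm : SymmFun A)
    (hdiag : ∀ x : G, A (fun _ => x) = 0) (x : Fin n → G) :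
    (n.factorial • A x : S) = 0 := by
  classical
  set f := multiAddToML A haddA with hf
  have key : ∀ T : Finset (Fin n), A (fun _ => ∑ j ∈ T, x j)
      = ∑ g ∈ Fintype.piFinset (fun _ : Fin n => T), A (x ∘ g) := by
    intro T
    calc A (fun _ => ∑ j ∈ T, x j) = f (fun _ => ∑ j ∈ T, x j) := rfl
      _ = ∑ r ∈ Fintype.piFinset (fun _ : Fin n => T), f (fun i => x (r i)) :=
          f.map_sum_finset (fun _ j => x j) (fun _ => T)
      _ = ∑ g ∈ Fintype.piFinset (fun _ : Fin n => T), A (x ∘ g) := rfl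
  have pif : ∀ T : Finset (Fin n), Fintype.piFinset (fun _ : Fin n => T)
      = Finset.univ.filter (fun g : Fin n → Fin n => ∀ i, g i ∈ T) := by
    intro T
    ext g
    simp [Fintype.mem_piFinset]
  have e1 : (0 : S) = ∑ T ∈ (Finset.univ : Finset (Fin n)).powerset,
      (-1:ℤ)^(n - T.card) • A (fun _ => ∑ j ∈ T, x j) := by
    simp [hdiag]
  have e2 : (0 : S) = ∑ g : Fin n → Fin n,
      (∑ T ∈ (Finset.univ : Finset (Fin n)).powerset.filter (fun T => ∀ i, g i ∈ T),
        (-1:ℤ)^(n - T.card)) • A (x ∘ g) := by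
    rw [e1]
    have : ∀ T ∈ (Finset.univ : Finset (Fin n)).powerset,
        (-1:ℤ)^(n - T.card) • A (fun _ => ∑ j ∈ T, x j)
        = ∑ g : Fin n → Fin n, (if ∀ i, g i ∈ T then (-1:ℤ)^(n - T.card) else 0) • A (x ∘ g) := by
      intro T _
      rw [key T, pif T, Finset.smul_sum, Finset.sum_filter]
      apply Finset.sum_congr rfl
      intro g _
      split <;> simp
    rw [Finset.sum_congr rfl this, Finset.sum_comm]
    apply Finset.sum_congr rfl
    intro g _
    rw [Finset.sum_filter, ← Finset.sum_smul]
  have e3 : (0 : S) = ∑ σ : Equiv.Perm (Fin n), A (x ∘ σ) := by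
    rw [e2]
    have : ∀ g : Fin n → Fin n,
        (∑ T ∈ (Finset.univ : Finset (Fin n)).powerset.filter (fun T => ∀ i, g i ∈ T),
          (-1:ℤ)^(n - T.card)) • A (x ∘ g)
        = if Function.Bijective g then A (x ∘ g) else 0 := by
      intro g
      rw [coeff_sum g]
      split <;> simp
    simp only [this]
    rw [← Finset.sum_filter]
    refine (Finset.sum_bij (fun (σ : Equiv.Perm (Fin n)) _ => (σ : Fin n → Fin n))
      ?_ ?_ ?_ ?_).symm
    · intro σ _
      exact Finset.mem_filter.mpr ⟨Finset.mem_univ _, σ.bijective⟩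
    · intro a _ b _ h
      exact Equiv.coe_fn_injective h
    · intro g hg
      rw [Finset.mem_filter] at hg
      exact ⟨Equiv.ofBijective g hg.2, Finset.mem_univ _, rfl⟩
    · intro σ _
      rfl
  have e4 : ∑ σ : Equiv.Perm (Fin n), A (x ∘ σ) = n.factorial • A x := by
    rw [Finset.sum_congr rfl (fun σ _ => hsymm σ x), Finset.sum_const, Finset.card_univ,
      Fintype.card_perm, Fintype.card_fin]
  rw [← e4, ← e3]

end MonoidCase

theorem stmt6 (G S : Type*) [AddCommSemigroup G] [AddCommGroup S] (n : ℕ) (hn : 0 < n)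
    (hinj : Function.Injective (fun s : S => n.factorial • s))
    (A : (Fin n → G) → S) (haddA : MultiAdd A) (hsymm : SymmFun A)
    (hdiag : ∀ x : G, A (fun _ => x) = 0) :
    ∀ x : Fin n → G, A x = 0 := by
  classical
  set A' : (Fin n → WithZero G) → S := fun y =>
    if h : ∀ i, y i ≠ 0 then A (fun i => (y i).unzero (h i)) else 0 with hA'
  have L1 : ∀ y : Fin n → WithZero G, (∃ j, y j = 0) → A' y = 0 := by
    intro y ⟨j, hj⟩
    rw [hA']
    exact dif_neg (fun h => h j hj)
  have L2 : ∀ z : Fin n → G, A' (fun j => (z j : WithZero G)) = A z := by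
    intro z
    show (if h : ∀ i : Fin n, ((z i : WithZero G)) ≠ 0
        then A (fun i => ((z i : WithZero G)).unzero (h i)) else 0) = A z
    rw [dif_pos (fun i : Fin n => WithZero.coe_ne_zero)]
    simp
  have haddA' : MultiAdd A' := by
    intro i y u v
    match u, v with
    | 0, v =>
      rw [zero_add, L1 (Function.update y i 0) ⟨i, Function.update_self i 0 y⟩, zero_add]
    | (u : G), 0 =>
      rw [add_zero, L1 (Function.update y i 0) ⟨i, Function.update_self i 0 y⟩, add_zero]
    | (a : G), (b : G) =>
      by_cases hy : ∃ j, j ≠ i ∧ y j = 0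
      · obtain ⟨j, hji, hj⟩ := hy
        have h0 : ∀ c : WithZero G, A' (Function.update y i c) = 0 := by
          intro c
          exact L1 _ ⟨j, by rw [Function.update_of_ne hji]; exact hj⟩
        rw [h0, h0, h0, add_zero]
      · push_neg at hy
        set z : Fin n → G := fun j =>
          if hj : j = i then a else (y j).unzero (hy j hj) with hz
        have hupd : ∀ c : G, Function.update y i (c : WithZero G)
            = fun j => ((Function.update z i c j : G) : WithZero G) := by
          intro c
          funext j
          by_cases hj : j = i
          · subst hj; simp
          · rw [Function.update_of_ne hj, Function.update_of_ne hj, hz]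
            simp only [dif_neg hj]
            rw [WithZero.coe_unzero]
        have hab : ((a : WithZero G) + (b : WithZero G)) = ((a + b : G) : WithZero G) := rfl
        rw [hab, hupd, hupd, hupd, L2, L2, L2]
        exact haddA i z a b
  have hsymm' : SymmFun A' := by
    intro σ y
    by_cases h : ∀ i, y i ≠ 0
    · set z : Fin n → G := fun j => (y j).unzero (h j) with hz
      have hy : y = fun j => ((z j : G) : WithZero G) := by
        funext j; rw [hz]; simp [WithZero.coe_unzero]
      rw [hy]
      have : ((fun j => ((z j : G) : WithZero G)) ∘ σ) = fun j => ((z (σ j) : G) : WithZero G) :=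
        rfl
      rw [this, L2, L2]
      exact hsymm σ z
    · push_neg at h
      obtain ⟨j, hj⟩ := h
      rw [L1 _ ⟨j, hj⟩, L1 (y ∘ σ) ⟨σ.symm j, by simp [hj]⟩]
  have hdiag' : ∀ c : WithZero G, A' (fun _ => c) = 0 := by
    intro c
    match c with
    | 0 => exact L1 _ ⟨⟨0, hn⟩, rfl⟩
    | (a : G) => rw [L2 (fun _ => a)]; exact hdiag a
  intro x
  have := monoid_case A' haddA' hsymm' hdiag' (fun i => (x i : WithZero G))
  rw [L2 x] at this
  have h0 : (fun s : S => n.factorial • s) (A x) = (fun s : S => n.factorial • s) 0 := by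
    simpa using this
  exact hinj h0
end

section
/- Let n ≥ 2 be an integer, F a field of characteristic zero, and f : F → ℂ a quadratic function. Then f(x^n) = f(x)^n holds for all x ∈ F if and only if there exist ring homomorphisms φ₁, φ₂ : F → ℂ such that f(x) = f(1)·φ₁(x)φ₂(x) for all x ∈ F, where either f(1) = 0 (so f ≡ 0) or f(1)^{n−1} = 1. -/
/-!
Write `f x = B x x` and `c = f 1`. Reading `f ((x + k y) ^ n) = f (x + k y) ^ n` as a polynomial
identity in `k ∈ ℕ` and comparing the coefficients of `k` gives
`B (x ^ n, x ^ (n - 1) y) = f x ^ (n - 1) B (x, y)`. Doing the same with this identity at `1 + k x`,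
the coefficients of `1`, `k`, `k²` show: either `B = 0`, or `c ^ (n - 1) = 1` and
`B (x, y) = c (2 ψ x ψ y - ψ (x y))` for the additive map `ψ = B (1, ·) / c`, which moreover
satisfies `ψ (x² y) = ψ (x²) ψ y + 2 ψ x ψ (x y) - 2 (ψ x)² ψ y`. Polarising the latter shows that
`D (x, y) = ψ (x y) - ψ x ψ y` is a rank-one form `δ x δ y`, and then `ψ + δ`, `ψ - δ` are ring
homomorphisms whose product is `2 (ψ x)² - ψ (x²) = f x / c`.
-/

open Polynomial Finset

namespace Polynomial

section CoeffPow
variable {R : Type*} [CommSemiring R]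

theorem coeff_zero_pow (p : R[X]) (n : ℕ) : (p ^ n).coeff 0 = p.coeff 0 ^ n := by
  simp only [coeff_zero_eq_eval_zero, eval_pow]

theorem coeff_one_pow (p : R[X]) (n : ℕ) :
    (p ^ n).coeff 1 = n • (p.coeff 0 ^ (n - 1) * p.coeff 1) := by
  induction n with
  | zero => simp [coeff_one]
  | succ n ih =>
    rw [pow_succ, coeff_mul, Nat.sum_antidiagonal_succ, Nat.antidiagonal_zero, sum_singleton, ih,
      coeff_zero_pow]
    rcases n with _ | n
    · simp
    · simp only [Nat.add_sub_cancel, pow_succ, nsmul_eq_mul]; push_cast; ring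

theorem coeff_two_pow (p : R[X]) (n : ℕ) :
    (p ^ n).coeff 2 = n • (p.coeff 0 ^ (n - 1) * p.coeff 2)
      + n.choose 2 • (p.coeff 0 ^ (n - 2) * p.coeff 1 ^ 2) := by
  induction n with
  | zero => simp [coeff_one]
  | succ n ih =>
    rw [pow_succ, coeff_mul, Nat.sum_antidiagonal_succ, Nat.sum_antidiagonal_succ,
      Nat.antidiagonal_zero, sum_singleton, ih, coeff_one_pow, coeff_zero_pow]
    rcases n with _ | _ | n
    · simp
    · simp only [zero_add, pow_one, pow_zero, one_mul, one_smul, Nat.choose_succ_self, zero_smul,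
        add_zero, Nat.reduceAdd, Nat.choose_self, Nat.sub_self, nsmul_eq_mul, Nat.cast_ofNat]
      ring
    · rw [Nat.choose_succ_succ (n + 2) 1, Nat.choose_one_right]
      simp only [Nat.add_sub_cancel, pow_succ, nsmul_eq_mul]; push_cast; ring

theorem coeff_C_add_C_mul_X_pow (a b : R) (m k : ℕ) :
    ((C a + C b * X) ^ m).coeff k = m.choose k • (a ^ (m - k) * b ^ k) := by
  have hterm (i : ℕ) : (C b * X) ^ i * C a ^ (m - i) * (m.choose i : R[X]) =
      C (m.choose i • (a ^ (m - i) * b ^ i)) * X ^ i := by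
    rw [nsmul_eq_mul, C_mul, C_mul, C_pow, C_pow, map_natCast]; ring
  simp only [add_comm (C a), add_pow, hterm, finsetSum_coeff, coeff_C_mul_X_pow]
  rw [sum_ite_eq]
  split_ifs with hk
  · rfl
  · rw [Nat.choose_eq_zero_of_lt (by simpa using hk), zero_smul]

theorem coeff_one_add_C_mul_X_pow (b : R) (m k : ℕ) :
    ((1 + C b * X) ^ m).coeff k = m.choose k • b ^ k := by
  simpa using coeff_C_add_C_mul_X_pow 1 b m k

end CoeffPow

section BilinPoly
variable {R S T : Type*} [CommSemiring R] [CommSemiring S] [CommSemiring T]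

noncomputable def bilinPoly (β : R →+ S →+ T) (p : R[X]) (q : S[X]) : T[X] :=
  p.sum fun i a => q.sum fun j b => monomial (i + j) (β a b)

theorem eval_natCast_bilinPoly (β : R →+ S →+ T) (p : R[X]) (q : S[X]) (k : ℕ) :
    (bilinPoly β p q).eval (k : T) = β (p.eval (k : R)) (q.eval (k : S)) := by
  have hscale (a : R) (b : S) (i j : ℕ) :
      β (a * (k : R) ^ i) (b * (k : S) ^ j) = β a b * (k : T) ^ (i + j) := by
    rw [← Nat.cast_pow, ← Nat.cast_pow, ← nsmul_eq_mul', ← nsmul_eq_mul', map_nsmul, map_nsmul,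
      AddMonoidHom.nsmul_apply, smul_smul, nsmul_eq_mul']
    push_cast; ring
  rw [bilinPoly, Polynomial.sum_def, eval_finsetSum]
  simp only [Polynomial.sum_def, eval_finsetSum, eval_monomial]
  simp only [eval_eq_sum, Polynomial.sum_def, map_sum, AddMonoidHom.finsetSum_apply, hscale]
  exact sum_comm

theorem coeff_bilinPoly (β : R →+ S →+ T) (p : R[X]) (q : S[X]) (n : ℕ) :
    (bilinPoly β p q).coeff n = ∑ x ∈ antidiagonal n, β (p.coeff x.1) (q.coeff x.2) := by
  simp only [bilinPoly, Polynomial.sum_def, finsetSum_coeff, coeff_monomial]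
  rw [← sum_product', ← sum_filter]
  refine sum_subset (fun x hx => by simp_all) fun x hxn hx => ?_
  rw [HasAntidiagonal.mem_antidiagonal] at hxn
  simp only [mem_filter, mem_product, mem_support_iff, hxn, and_true, not_and_or, not_not] at hx
  rcases hx with hp | hq <;> simp [*]

end BilinPoly

theorem eq_of_eval_natCast_eq {K : Type*} [Field K] [CharZero K] {p q : K[X]}
    (h : ∀ k : ℕ, p.eval (k : K) = q.eval (k : K)) : p = q :=
  eq_of_infinite_eval_eq p q <| Set.infinite_of_injective_forall_mem Nat.cast_injective h

end Polynomial

section Jordan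
variable {R K : Type*} [CommRing R] [Field K]

theorem map_mul_mul_of_jordan [NeZero (2 : K)] (ψ : R →+ K)
    (hJ : ∀ x y, ψ (x ^ 2 * y) = ψ (x ^ 2) * ψ y + 2 * ψ x * ψ (x * y) - 2 * ψ x ^ 2 * ψ y)
    (x y z : R) :
    ψ (x * y * z) = ψ (x * y) * ψ z + ψ (x * z) * ψ y + ψ (y * z) * ψ x - 2 * ψ x * ψ y * ψ z := by
  have hxy := hJ (x + y) z
  rw [show (x + y) ^ 2 * z = x ^ 2 * z + y ^ 2 * z + 2 • (x * y * z) by ring,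
    show (x + y) ^ 2 = x ^ 2 + y ^ 2 + 2 • (x * y) by ring, add_mul x y z] at hxy
  simp only [map_add, map_nsmul, hJ x z, hJ y z] at hxy
  simp only [nsmul_eq_mul, Nat.cast_ofNat] at hxy
  refine mul_left_cancel₀ (two_ne_zero (α := K)) ?_
  linear_combination hxy

def mulDefect (ψ : R →+ K) (x y : R) : K := ψ (x * y) - ψ x * ψ y

theorem mulDefect_rank_one (ψ : R →+ K)
    (hT : ∀ x y z, ψ (x * y * z) =
      ψ (x * y) * ψ z + ψ (x * z) * ψ y + ψ (y * z) * ψ x - 2 * ψ x * ψ y * ψ z)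
    (a b u v : R) :
    mulDefect ψ a b * mulDefect ψ u v = mulDefect ψ a u * mulDefect ψ b v := by
  -- expand `ψ (a * b * (u * v)) = ψ (a * u * (b * v))` in two ways
  have hab := hT a b (u * v)
  have hau := hT a u (b * v)
  have huv := hT u v a
  have hbv := hT b v a
  simp only [mulDefect]
  ring_nf at hab hau huv hbv ⊢
  linear_combination hau - hab + ψ u * hbv - ψ b * huv

theorem exists_eq_mul_of_rank_one [IsAlgClosed K] {α : Type*} [Nonempty α] (D : α → α → K)
    (hD : ∀ a b u v, D a b * D u v = D a u * D b v) :
    ∃ (c : K) (w : α), ∀ u v, D u v = c * D u w * (c * D v w) := by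
  by_cases hdiag : ∃ w, D w w ≠ 0
  · obtain ⟨w, hw⟩ := hdiag
    obtain ⟨s, hs⟩ := IsAlgClosed.exists_pow_nat_eq (D w w) two_pos
    have hs0 : s ≠ 0 := by rintro rfl; exact hw (by rw [← hs]; ring)
    refine ⟨s⁻¹, w, fun u v => ?_⟩
    have huv := hD u w v w
    field_simp
    linear_combination -huv + D u v * hs
  · simp only [not_exists, not_not] at hdiag
    refine ⟨0, Classical.arbitrary α, fun u v => ?_⟩
    have huv := hD u v u v
    rw [hdiag u, zero_mul, mul_self_eq_zero] at huv
    simp [huv]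

theorem map_mul_self_add (ψ δ : R →+ K) (hδ : ∀ x, δ (x * x) = 2 * δ x * ψ x)
    (hδδ : ∀ x, δ x * δ x = ψ (x * x) - ψ x * ψ x) (x : R) :
    (ψ + δ) (x * x) = (ψ + δ) x * (ψ + δ) x := by
  simp only [AddMonoidHom.add_apply, hδ]
  linear_combination -hδδ x

theorem exists_ringHom_of_jordan [IsAlgClosed K] [NeZero (2 : K)] (ψ : R →+ K) (h1 : ψ 1 = 1)
    (hJ : ∀ x y, ψ (x ^ 2 * y) = ψ (x ^ 2) * ψ y + 2 * ψ x * ψ (x * y) - 2 * ψ x ^ 2 * ψ y) :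
    ∃ φ₁ φ₂ : R →+* K, ∀ x, 2 * ψ x = φ₁ x + φ₂ x := by
  obtain ⟨c, w, hcw⟩ :=
    exists_eq_mul_of_rank_one _ (mulDefect_rank_one ψ (map_mul_mul_of_jordan ψ hJ))
  let δ : R →+ K := c • (ψ.comp (AddMonoidHom.mulRight w) - ψ w • ψ)
  have hδ (u : R) : δ u = c * mulDefect ψ u w := by simp [δ, mulDefect, mul_comm (ψ w)]
  have hδδ (x : R) : δ x * δ x = mulDefect ψ x x := by rw [hcw, hδ]
  have hδsq (x : R) : δ (x * x) = 2 * δ x * ψ x := by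
    simp only [hδ, mulDefect, ← sq, hJ]; ring
  have hδ1 : δ 1 = 0 := by simp [hδ, mulDefect, h1]
  refine ⟨(ψ + δ).mkRingHomOfMulSelfOfTwoNeZero (map_mul_self_add ψ δ hδsq hδδ) two_ne_zero
      (by simp [h1, hδ1]),
    (ψ + -δ).mkRingHomOfMulSelfOfTwoNeZero
      (map_mul_self_add ψ (-δ) (fun x => by simp [hδsq]) fun x => by simpa [mulDefect] using hδδ x)
      two_ne_zero (by simp [h1, hδ1]), fun x => ?_⟩
  change 2 * ψ x = (ψ + δ) x + (ψ + -δ) x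
  simp only [AddMonoidHom.add_apply, AddMonoidHom.neg_apply]
  ring

end Jordan

section Biadditive
variable {F K : Type*} [CommRing F] [Field K] (β : F →+ F →+ K)

theorem apply_add_natCast_mul (x y z : F) (k : ℕ) : β (x + k * y) z = β x z + k * β y z := by
  rw [map_add, AddMonoidHom.add_apply, ← nsmul_eq_mul, map_nsmul, AddMonoidHom.nsmul_apply,
    nsmul_eq_mul]

theorem apply_add_natCast_mul_self (hsymm : ∀ x y, β x y = β y x) (x y : F) (k : ℕ) :
    β (x + k * y) (x + k * y) = β x x + 2 * k * β x y + k ^ 2 * β y y := by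
  rw [apply_add_natCast_mul, hsymm x, hsymm y, apply_add_natCast_mul, apply_add_natCast_mul,
    hsymm y x]
  ring

-- The coefficient of `X` in `f ((x + k y) ^ (n + 1)) = f (x + k y) ^ (n + 1)`, a polynomial
-- identity in `k`.
theorem apply_pow_succ_pow_mul [CharZero K] (hsymm : ∀ x y, β x y = β y x) {n : ℕ}
    (h : ∀ x, β (x ^ (n + 1)) (x ^ (n + 1)) = β x x ^ (n + 1)) (x y : F) :
    β (x ^ (n + 1)) (x ^ n * y) = β x x ^ n * β x y := by
  have hpoly : bilinPoly β ((C x + C y * X) ^ (n + 1)) ((C x + C y * X) ^ (n + 1)) =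
      (C (β x x) + C (2 * β x y) * X + C (β y y) * X ^ 2) ^ (n + 1) := by
    refine eq_of_eval_natCast_eq fun k => ?_
    simp only [eval_natCast_bilinPoly, eval_pow, eval_add, eval_mul, eval_C, eval_X, mul_comm y, h,
      apply_add_natCast_mul_self β hsymm]
    ring
  have h1 : (n + 1) • β (x ^ (n + 1)) (x ^ n * y) + (n + 1) • β (x ^ (n + 1)) (x ^ n * y) =
      (n + 1) • (β x x ^ n * (2 * β x y)) := by
    simpa [coeff_bilinPoly, Nat.sum_antidiagonal_succ, coeff_C_add_C_mul_X_pow, coeff_one_pow,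
      coeff_C, coeff_X, hsymm _ (x ^ (n + 1)), -nsmul_eq_mul] using congrArg (coeff · 1) hpoly
  exact mul_left_cancel₀ (mul_ne_zero two_ne_zero n.cast_add_one_ne_zero) (by linear_combination h1)

-- `apply_pow_succ_pow_mul` at `1 + k x`, as a polynomial identity in `k`.
theorem bilinPoly_one_add_eq [CharZero K] (hsymm : ∀ x y, β x y = β y x) {n : ℕ}
    (h : ∀ x, β (x ^ (n + 1)) (x ^ (n + 1)) = β x x ^ (n + 1)) (x y : F) :
    bilinPoly β ((1 + C x * X) ^ (n + 1)) ((1 + C x * X) ^ n * C y) =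
      (C (β 1 1) + C (2 * β 1 x) * X + C (β x x) * X ^ 2) ^ n * (C (β 1 y) + C (β x y) * X) := by
  refine eq_of_eval_natCast_eq fun k => ?_
  simp only [eval_natCast_bilinPoly, eval_pow, eval_add, eval_mul, eval_one, eval_C, eval_X,
    mul_comm x, apply_pow_succ_pow_mul β hsymm h, apply_add_natCast_mul_self β hsymm,
    apply_add_natCast_mul]
  ring

theorem apply_one_eq_pow_mul_apply_one [CharZero K] (hsymm : ∀ x y, β x y = β y x) {n : ℕ}
    (h : ∀ x, β (x ^ (n + 1)) (x ^ (n + 1)) = β x x ^ (n + 1)) (y : F) :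
    β 1 y = β 1 1 ^ n * β 1 y := by
  simpa [coeff_bilinPoly, coeff_mul_C, coeff_zero_pow] using
    congrArg (coeff · 0) (bilinPoly_one_add_eq β hsymm h 0 y)

theorem bilinPoly_one_add_eq_coeff_one [CharZero K] (hsymm : ∀ x y, β x y = β y x) {n : ℕ}
    (h : ∀ x, β (x ^ (n + 1)) (x ^ (n + 1)) = β x x ^ (n + 1)) (x y : F) :
    n • β 1 (x * y) + (n + 1) • β x y =
      β 1 1 ^ n * β x y + n • (β 1 1 ^ (n - 1) * (2 * β 1 x) * β 1 y) := by
  simpa [coeff_bilinPoly, Nat.sum_antidiagonal_succ, coeff_one_add_C_mul_X_pow, coeff_zero_pow,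
    coeff_one_pow, coeff_C, coeff_X, coeff_mul, -nsmul_eq_mul] using
    congrArg (coeff · 1) (bilinPoly_one_add_eq β hsymm h x y)

theorem bilinPoly_one_add_eq_coeff_two [CharZero K] (hsymm : ∀ x y, β x y = β y x) {n : ℕ}
    (h : ∀ x, β (x ^ (n + 1)) (x ^ (n + 1)) = β x x ^ (n + 1)) (x y : F) :
    n.choose 2 • β 1 (x ^ 2 * y) + ((n + 1) • n • β x (x * y) + (n + 1).choose 2 • β (x ^ 2) y) =
      n • (β 1 1 ^ (n - 1) * (2 * β 1 x) * β x y) + (n • (β 1 1 ^ (n - 1) * β x x)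
        + n.choose 2 • (β 1 1 ^ (n - 2) * (2 * β 1 x) ^ 2)) * β 1 y := by
  simpa [coeff_bilinPoly, Nat.sum_antidiagonal_succ, coeff_one_add_C_mul_X_pow, coeff_zero_pow,
    coeff_one_pow, coeff_two_pow, coeff_C, coeff_X, coeff_mul, -nsmul_eq_mul] using
    congrArg (coeff · 2) (bilinPoly_one_add_eq β hsymm h x y)

theorem apply_eq_zero_of_apply_one_one_eq_zero [CharZero K] (hsymm : ∀ x y, β x y = β y x)
    {n : ℕ} (h : ∀ x, β (x ^ (n + 1)) (x ^ (n + 1)) = β x x ^ (n + 1)) (hn : n ≠ 0)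
    (hc : β 1 1 = 0) (x y : F) : β x y = 0 := by
  have hrow (y : F) : β 1 y = 0 := by
    simpa [hc, hn] using apply_one_eq_pow_mul_apply_one β hsymm h y
  have h1 := bilinPoly_one_add_eq_coeff_one β hsymm h x y
  rw [hrow, hrow, hrow, zero_pow hn] at h1
  exact (mul_eq_zero.mp (by linear_combination h1)).resolve_left n.cast_add_one_ne_zero

theorem apply_one_one_pow_eq_one [CharZero K] (hsymm : ∀ x y, β x y = β y x) {n : ℕ}
    (h : ∀ x, β (x ^ (n + 1)) (x ^ (n + 1)) = β x x ^ (n + 1)) (hc : β 1 1 ≠ 0) :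
    β 1 1 ^ n = 1 :=
  (mul_eq_right₀ hc).mp (apply_one_eq_pow_mul_apply_one β hsymm h 1).symm

noncomputable def normalizedRow : F →+ K := (β 1 1)⁻¹ • β 1

theorem apply_one_eq_mul_normalizedRow (hc : β 1 1 ≠ 0) (x : F) :
    β 1 x = β 1 1 * normalizedRow β x := by
  simp [normalizedRow, hc]

theorem normalizedRow_one (hc : β 1 1 ≠ 0) : normalizedRow β 1 = 1 := by
  simp [normalizedRow, hc]

theorem apply_eq_normalizedRow [CharZero K] (hsymm : ∀ x y, β x y = β y x) {n : ℕ}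
    (h : ∀ x, β (x ^ (n + 1)) (x ^ (n + 1)) = β x x ^ (n + 1)) (hn : n ≠ 0) (hc : β 1 1 ≠ 0)
    (x y : F) :
    β x y = β 1 1 * (2 * normalizedRow β x * normalizedRow β y - normalizedRow β (x * y)) := by
  have hcn := apply_one_one_pow_eq_one β hsymm h hc
  have hcn' : β 1 1 ^ (n - 1) * β 1 1 = 1 := by rw [pow_sub_one_mul hn, hcn]
  have h1 := bilinPoly_one_add_eq_coeff_one β hsymm h x y
  rw [apply_one_eq_mul_normalizedRow β hc (x * y), apply_one_eq_mul_normalizedRow β hc x,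
    apply_one_eq_mul_normalizedRow β hc y, hcn] at h1
  refine mul_left_cancel₀ (Nat.cast_ne_zero.mpr hn : (n : K) ≠ 0) ?_
  linear_combination h1 + 2 * n * β 1 1 * normalizedRow β x * normalizedRow β y * hcn'

theorem normalizedRow_jordan [CharZero K] (hsymm : ∀ x y, β x y = β y x) {n : ℕ}
    (h : ∀ x, β (x ^ (n + 1)) (x ^ (n + 1)) = β x x ^ (n + 1)) (hn : n ≠ 0) (hc : β 1 1 ≠ 0)
    (x y : F) :
    normalizedRow β (x ^ 2 * y) = normalizedRow β (x ^ 2) * normalizedRow β y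
      + 2 * normalizedRow β x * normalizedRow β (x * y)
      - 2 * normalizedRow β x ^ 2 * normalizedRow β y := by
  have hcn := apply_one_one_pow_eq_one β hsymm h hc
  have hcn' : β 1 1 ^ (n - 1) * β 1 1 = 1 := by rw [pow_sub_one_mul hn, hcn]
  -- for `n = 1` the exponent `n - 2` truncates to `0`, but then the binomial vanishes
  have hchoose : (n.choose 2 : K) * (β 1 1 ^ (n - 2) * β 1 1 ^ 2) = n.choose 2 := by
    rcases lt_or_ge n 2 with hn2 | hn2
    · rw [Nat.choose_eq_zero_of_lt hn2, Nat.cast_zero, zero_mul]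
    · rw [pow_sub_mul_pow _ hn2, hcn, mul_one]
  have h2 := bilinPoly_one_add_eq_coeff_two β hsymm h x y
  rw [apply_eq_normalizedRow β hsymm h hn hc x (x * y), apply_eq_normalizedRow β hsymm h hn hc x x,
    apply_eq_normalizedRow β hsymm h hn hc x y, apply_eq_normalizedRow β hsymm h hn hc (x ^ 2) y,
    apply_one_eq_mul_normalizedRow β hc (x ^ 2 * y), apply_one_eq_mul_normalizedRow β hc x,
    apply_one_eq_mul_normalizedRow β hc y, show x * (x * y) = x ^ 2 * y by ring, ← sq x] at h2
  simp only [nsmul_eq_mul, Nat.cast_choose_two] at h2 hchoose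
  push_cast at h2 hchoose
  have hne : (n : K) * (n + 2) * β 1 1 ≠ 0 := by
    refine mul_ne_zero (mul_ne_zero (Nat.cast_ne_zero.mpr hn) ?_) hc
    exact_mod_cast (n + 1).succ_ne_zero
  -- up to `hcn'` and `hchoose`, `h2` is now `n (n + 2) c` times the claim
  refine mul_left_cancel₀ hne ?_
  linear_combination -h2
    - n * β 1 1 * ((2 * normalizedRow β x ^ 2 - normalizedRow β (x ^ 2)) * normalizedRow β y
      + 2 * normalizedRow β x * (2 * normalizedRow β x * normalizedRow β y
        - normalizedRow β (x * y))) * hcn'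
    - 4 * β 1 1 * normalizedRow β x ^ 2 * normalizedRow β y * hchoose

theorem exists_ringHom_apply_self_eq_mul [CharZero K] [IsAlgClosed K]
    (hsymm : ∀ x y, β x y = β y x) {n : ℕ}
    (h : ∀ x, β (x ^ (n + 1)) (x ^ (n + 1)) = β x x ^ (n + 1)) (hn : n ≠ 0) (hc : β 1 1 ≠ 0) : ∃ φ₁ φ₂ : F →+* K, ∀ x, β x x = β 1 1 * (φ₁ x * φ₂ x) := by
  obtain ⟨φ₁, φ₂, hφ⟩ := exists_ringHom_of_jordan (normalizedRow β) (normalizedRow_one β hc)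
    (normalizedRow_jordan β hsymm h hn hc)
  refine ⟨φ₁, φ₂, fun x => ?_⟩
  have hsq := hφ (x * x)
  rw [map_mul φ₁, map_mul φ₂] at hsq
  rw [apply_eq_normalizedRow β hsymm h hn hc]
  linear_combination β 1 1 * ((2 * normalizedRow β x + φ₁ x + φ₂ x) / 2 * hφ x - hsq / 2)

end Biadditive

theorem map_pow_succ_of_map_mul {M N : Type*} [Monoid M] [Monoid N] {φ : M → N}
    (h : ∀ x y, φ (x * y) = φ x * φ y) (x : M) (m : ℕ) : φ (x ^ (m + 1)) = φ x ^ (m + 1) := by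
  induction m with
  | zero => simp
  | succ m ih => rw [pow_succ, h, ih, ← pow_succ]

theorem stmt10_general (n : ℕ) (hn : 2 ≤ n) (F : Type*) [Field F] (B : F → F → ℂ)
    (hsymm : ∀ x y : F, B x y = B y x)
    (hadd : ∀ x y z : F, B (x + y) z = B x z + B y z)
    (f : F → ℂ) (hf : ∀ x, f x = B x x) :
    (∀ x : F, f (x ^ n) = f x ^ n) ↔
      ∃ φ₁ φ₂ : F → ℂ,
        (∀ x y : F, φ₁ (x + y) = φ₁ x + φ₁ y) ∧ (∀ x y : F, φ₁ (x * y) = φ₁ x * φ₁ y) ∧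
        (∀ x y : F, φ₂ (x + y) = φ₂ x + φ₂ y) ∧ (∀ x y : F, φ₂ (x * y) = φ₂ x * φ₂ y) ∧
        (∀ x : F, f x = f 1 * (φ₁ x * φ₂ x)) ∧
        ((f 1 = 0 ∧ ∀ x : F, f x = 0) ∨ f 1 ^ (n - 1) = 1) := by
  let β : F →+ F →+ ℂ := AddMonoidHom.mk'
    (fun x => AddMonoidHom.mk' (B x) fun y z => by rw [hsymm, hadd, hsymm, hsymm z])
    fun x y => AddMonoidHom.ext (hadd x y)
  obtain ⟨m, rfl⟩ : ∃ m, n = m + 1 := ⟨n - 1, by omega⟩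
  have hm : m ≠ 0 := by omega
  rw [Nat.add_sub_cancel]
  constructor
  · intro h
    have hβ : ∀ x, β (x ^ (m + 1)) (x ^ (m + 1)) = β x x ^ (m + 1) := by
      simp only [hf] at h; exact h
    by_cases hc : B 1 1 = 0
    · have hB : ∀ x y, B x y = 0 := apply_eq_zero_of_apply_one_one_eq_zero β hsymm hβ hm hc
      refine ⟨0, 0, by simp, by simp, by simp, by simp, fun x => ?_, Or.inl ⟨?_, fun x => ?_⟩⟩ <;>
        simp [hf, hB]
    · obtain ⟨φ₁, φ₂, hφ⟩ := exists_ringHom_apply_self_eq_mul β hsymm hβ hm hc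
      exact ⟨φ₁, φ₂, map_add φ₁, map_mul φ₁, map_add φ₂, map_mul φ₂,
        fun x => by rw [hf, hf]; exact hφ x,
        Or.inr (by rw [hf]; exact apply_one_one_pow_eq_one β hsymm hβ hc)⟩
  · rintro ⟨φ₁, φ₂, -, hφ₁, -, hφ₂, hprod, hf1 | hf1⟩ x
    · simp [hf1.2]
    · rw [hprod, hprod x, map_pow_succ_of_map_mul hφ₁, map_pow_succ_of_map_mul hφ₂, mul_pow,
        mul_pow, pow_succ (f 1), hf1, one_mul]

theorem stmt10 (n : ℕ) (hn : 2 ≤ n) (F : Type*) [Field F] [CharZero F] (B : F → F → ℂ)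
    (hsymm : ∀ x y : F, B x y = B y x)
    (hadd : ∀ x y z : F, B (x + y) z = B x z + B y z)
    (f : F → ℂ) (hf : ∀ x, f x = B x x) :
    (∀ x : F, f (x ^ n) = f x ^ n) ↔
      ∃ φ₁ φ₂ : F → ℂ,
        (∀ x y : F, φ₁ (x + y) = φ₁ x + φ₁ y) ∧ (∀ x y : F, φ₁ (x * y) = φ₁ x * φ₁ y) ∧
        (∀ x y : F, φ₂ (x + y) = φ₂ x + φ₂ y) ∧ (∀ x y : F, φ₂ (x * y) = φ₂ x * φ₂ y) ∧
        (∀ x : F, f x = f 1 * (φ₁ x * φ₂ x)) ∧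
        ((f 1 = 0 ∧ ∀ x : F, f x = 0) ∨ f 1 ^ (n - 1) = 1) :=
  stmt10_general n hn F B hsymm hadd f hf
end

section
/- Let F be a field of characteristic zero and a : F → ℂ an additive function satisfying a(xyz) + 2a(x)a(y)a(z) = a(x)a(yz) + a(y)a(xz) + a(z)a(xy) for all x, y, z ∈ F, with a(1) = 1. Then a can be written as a(x) = (m₁(x) + m₂(x))/2 where m₁, m₂ : F → ℂ are ring homomorphisms, or a itself is a ring homomorphism. -/
theorem stmt11 (F : Type*) [Field F] [CharZero F] (a : F → ℂ)
    (hadd : ∀ x y : F, a (x + y) = a x + a y)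
    (heq : ∀ x y z : F,
      a (x * y * z) + 2 * a x * a y * a z = a x * a (y * z) + a y * a (x * z) + a z * a (x * y))
    (h1 : a 1 = 1) :
    (∃ m₁ m₂ : F → ℂ,
      (∀ x y : F, m₁ (x + y) = m₁ x + m₁ y) ∧ (∀ x y : F, m₁ (x * y) = m₁ x * m₁ y) ∧
      (∀ x y : F, m₂ (x + y) = m₂ x + m₂ y) ∧ (∀ x y : F, m₂ (x * y) = m₂ x * m₂ y) ∧
      ∀ x : F, a x = (m₁ x + m₂ x) / 2)
    ∨ (∀ x y : F, a (x * y) = a x * a y) := by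
  obtain ⟨f, hf⟩ : ∃ f : F → F → ℂ, ∀ x y, f x y = a (x * y) - a x * a y :=
    ⟨_, fun _ _ => rfl⟩
  have fsym : ∀ x y : F, f x y = f y x := by
    intro x y
    rw [hf, hf, mul_comm x y, mul_comm (a x) (a y)]
  have key : ∀ x y z : F, f (x * y) z = a x * f y z + a y * f x z := by
    intro x y z
    rw [hf, hf, hf]
    linear_combination heq x y z
  have keyR : ∀ x y z : F, f x (y * z) = a y * f x z + a z * f x y := by
    intro x y z
    rw [fsym x (y * z), key y z x, fsym z x, fsym y x]
  have key2 : ∀ x y z w : F, f x y * f z w = f x z * f y w := by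
    intro x y z w
    have I' : f (x * y) (z * w)
        = a x * (a z * f y w + a w * f y z) + a y * (a z * f x w + a w * f x z) := by
      rw [key x y (z * w), keyR y z w, keyR x z w]
    have II' : f (x * z) (y * w)
        = a x * (a y * f z w + a w * f y z) + a z * (a y * f x w + a w * f x y) := by
      rw [key x z (y * w), keyR z y w, keyR x y w, fsym z y]
    have III : f (x * y) (z * w) - f (x * z) (y * w)
        = (f x z + a x * a z) * (f y w + a y * a w)
          - (f x y + a x * a y) * (f z w + a z * a w) := by
      simp only [hf]
      rw [show (x * y) * (z * w) = (x * z) * (y * w) from by ring]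
      ring
    linear_combination III + II' - I'
  by_cases hf0 : ∀ x y : F, f x y = 0
  · right
    intro x y
    have := hf0 x y
    rw [hf] at this
    linear_combination this
  · left
    push_neg at hf0
    obtain ⟨u, v, huv⟩ := hf0
    have hc : f u u ≠ 0 := by
      intro h
      apply huv
      have h2 := key2 u v u v
      rw [h, zero_mul] at h2
      exact mul_self_eq_zero.mp h2
    obtain ⟨t, ht⟩ := IsAlgClosed.exists_eq_mul_self (f u u)
    have htne : t ≠ 0 := by
      intro h
      rw [h, mul_zero] at ht
      exact hc ht
    obtain ⟨s, hs⟩ : ∃ s : F → ℂ, ∀ x, s x = f x u / t := ⟨_, fun _ => rfl⟩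
    have hss : ∀ x y : F, s x * s y = f x y := by
      intro x y
      have h2 := key2 x u y u
      rw [hs, hs, div_mul_div_comm, ← ht, h2, mul_div_assoc, div_self hc, mul_one]
    have hsmul : ∀ x y : F, s (x * y) = a x * s y + a y * s x := by
      intro x y
      rw [hs, hs, hs, key x y u]
      ring
    have hsadd : ∀ x y : F, s (x + y) = s x + s y := by
      intro x y
      rw [hs, hs, hs, hf, hf, hf,
        show (x + y) * u = x * u + y * u from by ring, hadd, hadd]
      ring
    refine ⟨fun x => a x + s x, fun x => a x - s x, ?_, ?_, ?_, ?_, ?_⟩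
    · intro x y
      show a (x + y) + s (x + y) = (a x + s x) + (a y + s y)
      rw [hadd, hsadd]; ring
    · intro x y
      show a (x * y) + s (x * y) = (a x + s x) * (a y + s y)
      have := hss x y
      rw [hf] at this
      rw [hsmul]
      linear_combination -this
    · intro x y
      show a (x + y) - s (x + y) = (a x - s x) + (a y - s y)
      rw [hadd, hsadd]; ring
    · intro x y
      show a (x * y) - s (x * y) = (a x - s x) * (a y - s y)
      have := hss x y
      rw [hf] at this
      rw [hsmul]
      linear_combination -this
    · intro x
      show a x = ((a x + s x) + (a x - s x)) / 2
      ring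
end

section
/- Let F be a field of characteristic zero, f : F → ℂ a quadratic function with symmetric bi-additive F₂, and suppose f(x²) = f(x)² for all x. If F₂(1,1) = 0, then f is identically zero. -/
theorem stmt12 (F : Type*) [Field F] [CharZero F] (F₂ : F → F → ℂ)
    (hsymm : ∀ x y : F, F₂ x y = F₂ y x)
    (hadd : ∀ x y z : F, F₂ (x + y) z = F₂ x z + F₂ y z)
    (f : F → ℂ) (hf : ∀ x, f x = F₂ x x)
    (heq : ∀ x : F, f (x ^ 2) = f x ^ 2)
    (h11 : F₂ 1 1 = 0) :
    ∀ x : F, f x = 0 := by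
  have h2 : ∀ u v w : F, F₂ u (v + w) = F₂ u v + F₂ u w := by
    intro u v w
    rw [hsymm, hadd, hsymm v u, hsymm w u]
  have hzero : ∀ v : F, F₂ 0 v = 0 := by
    intro v
    have h := hadd 0 0 v
    rw [add_zero] at h
    linear_combination -h
  have hneg : ∀ u v : F, F₂ (-u) v = -F₂ u v := by
    intro u v
    have h := hadd u (-u) v
    rw [add_neg_cancel, hzero] at h
    linear_combination -h
  have hneg2 : ∀ u v : F, F₂ u (-v) = -F₂ u v := by
    intro u v
    rw [hsymm, hneg, hsymm]
  have hG : ∀ y : F, F₂ y 1 = 0 := by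
    intro y
    have E0 := heq y
    have E1 := heq (y + 1)
    have E2 := heq (y + (-1))
    have E3 := heq (y + (1 + 1))
    rw [show (y + 1)^2 = y^2 + (y + y) + 1 by ring] at E1
    rw [show (y + (-1))^2 = y^2 + (-y + -y) + 1 by ring] at E2
    rw [show (y + (1+1))^2 = y^2 + (y + y + y + y) + (1+1+1+1) by ring] at E3
    simp only [hf, hadd, h2, hneg, hneg2] at E0 E1 E2 E3
    simp only [hsymm 1 y, hsymm 1 (y^2), hsymm y (y^2), h11] at E1 E2 E3
    linear_combination (E3 + 3*E0 - 3*E1 - E2)/24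
  intro x
  have E0 := heq x
  have E1 := heq (x + 1)
  have E2 := heq (x + (-1))
  rw [show (x + 1)^2 = x^2 + (x + x) + 1 by ring] at E1
  rw [show (x + (-1))^2 = x^2 + (-x + -x) + 1 by ring] at E2
  simp only [hf, hadd, h2, hneg, hneg2] at E0 E1 E2 ⊢
  simp only [hsymm 1 x, hsymm 1 (x^2), hsymm x (x^2), h11, hG] at E1 E2
  linear_combination (E1 + E2 - 2*E0)/8
end

section
/- Let F be a field of characteristic zero, f : F → ℂ a quadratic function with associated symmetric bi-additive function F₂ satisfying f(x²) = f(x)² for all x ∈ F and F₂(1,1) = 1. Define a(x) = F₂(x,1). Then f(x) = 2a(x)² − a(x²) for all x ∈ F. -/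
theorem stmt13 (F : Type*) [Field F] [CharZero F] (F₂ : F → F → ℂ)
    (hsymm : ∀ x y : F, F₂ x y = F₂ y x)
    (hadd : ∀ x y z : F, F₂ (x + y) z = F₂ x z + F₂ y z)
    (f : F → ℂ) (hf : ∀ x, f x = F₂ x x)
    (heq : ∀ x : F, f (x ^ 2) = f x ^ 2)
    (h11 : F₂ 1 1 = 1)
    (a : F → ℂ) (ha : ∀ x, a x = F₂ x 1) :
    ∀ x : F, f x = 2 * a x ^ 2 - a (x ^ 2) := by
  have hadd2 : ∀ x y z : F, F₂ x (y + z) = F₂ x y + F₂ x z := by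
    intro x y z
    rw [hsymm, hadd, hsymm y x, hsymm z x]
  have h0 : ∀ y : F, F₂ 0 y = 0 := by
    intro y
    have h := hadd 0 0 y
    rw [add_zero] at h
    exact left_eq_add.mp h
  have hneg : ∀ x y : F, F₂ (-x) y = - F₂ x y := by
    intro x y
    have h := hadd x (-x) y
    rw [add_neg_cancel, h0] at h
    linear_combination -h
  have hneg2 : ∀ x y : F, F₂ x (-y) = - F₂ x y := by
    intro x y
    rw [hsymm, hneg, hsymm]
  intro x
  have e0 := heq x
  have e1 := heq (x + 1)
  have e2 := heq (x - 1)
  have hx1 : (x + 1) ^ 2 = x ^ 2 + x + x + 1 := by ring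
  have hx2 : (x - 1) ^ 2 = x ^ 2 + (-x) + (-x) + 1 := by ring
  have hx3 : x - 1 = x + (-1 : F) := by ring
  rw [hx1] at e1
  rw [hx2, hx3] at e2
  simp only [hf, ha, hadd, hadd2, hneg, hneg2] at e0 e1 e2 ⊢
  rw [hsymm 1 x, hsymm x (x ^ 2), hsymm 1 (x ^ 2), h11] at e1 e2
  linear_combination (e1 + e2) / 4 - e0 / 2
end

section
/- Let F be a field of characteristic zero, f : F → ℂ a quadratic function, and a : F → ℂ an additive function such that f(x²) = a(x)⁴ for all x ∈ F. Then there exists a ring homomorphism φ : F → ℂ such that a(x) = a(1)·φ(x) and f(x) = a(1)⁴·φ(x)² for all x ∈ F. -/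
/-!
The form `S(x,y,z,w) = F₂(xy,zw) + F₂(xz,yw) + F₂(xw,yz) - 3 a(x)a(y)a(z)a(w)` is symmetric and
additive in each argument, and `f(x²) = a(x)⁴` says exactly that it vanishes on the diagonal; by
polarization it vanishes identically. Setting variables equal to `1` expresses `F₂` through `a`,
and substituting back leaves a quartic identity for `a` alone, from which
`a(1)·(a(1)a(xy) - a(x)a(y))² = 0` follows. So either `a = 0`, or `φ = a / a(1)` is a ring
homomorphism with `F₂(x,y) = a(1)⁴ φ(x) φ(y)`.
-/

structure IsSymmQuadriadditive {M K : Type*} [Add M] [Add K] (S : M → M → M → M → K) : Prop where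
  add_fst : ∀ x x' y z w, S (x + x') y z w = S x y z w + S x' y z w
  swap_fst_snd : ∀ x y z w, S x y z w = S y x z w
  swap_snd_thd : ∀ x y z w, S x y z w = S x z y w
  swap_thd_fth : ∀ x y z w, S x y z w = S x y w z

namespace IsSymmQuadriadditive

variable {M K : Type*} [AddCommMonoid M] {S : M → M → M → M → K}

theorem add_snd [Add K] (hS : IsSymmQuadriadditive S) (x y y' z w : M) :
    S x (y + y') z w = S x y z w + S x y' z w := by
  rw [hS.swap_fst_snd, hS.add_fst, ← hS.swap_fst_snd x, ← hS.swap_fst_snd x]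

theorem add_thd [Add K] (hS : IsSymmQuadriadditive S) (x y z z' w : M) :
    S x y (z + z') w = S x y z w + S x y z' w := by
  rw [hS.swap_snd_thd, hS.add_snd, ← hS.swap_snd_thd x y, ← hS.swap_snd_thd x y]

theorem add_fth [Add K] (hS : IsSymmQuadriadditive S) (x y z w w' : M) :
    S x y z (w + w') = S x y z w + S x y z w' := by
  rw [hS.swap_thd_fth, hS.add_thd, ← hS.swap_thd_fth x y z, ← hS.swap_thd_fth x y z]

theorem diag_add [CommSemiring K] (hS : IsSymmQuadriadditive S) (x y : M) :
    S (x + y) (x + y) (x + y) (x + y) =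
      S x x x x + 4 * S x x x y + 6 * S x x y y + 4 * S x y y y + S y y y y := by
  simp only [hS.add_fst, hS.add_snd, hS.add_thd, hS.add_fth]
  -- move every `x` in front of every `y`
  simp only [hS.swap_fst_snd y x, (hS.swap_snd_thd · y x), (hS.swap_thd_fth · · y x)]
  ring

theorem mixed_eq_zero [CommRing K] (hS : IsSymmQuadriadditive S) (h : ∀ x, S x x x x = 0) (x y : M) :
    4 * S x x x y + 6 * S x x y y + 4 * S x y y y = 0 := by
  linear_combination (hS.diag_add x y).symm + h (x + y) - h x - h y

variable [Field K] [CharZero K]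

theorem eq_zero_of_diag_pair (hS : IsSymmQuadriadditive S) (h : ∀ x, S x x x x = 0) (x y : M) :
    S x x y y = 0 := by
  have e₁ := hS.mixed_eq_zero h x y
  have e₂ := hS.mixed_eq_zero h x (y + y)
  have e₃ := hS.mixed_eq_zero h y (x + x)
  simp only [hS.add_snd, hS.add_thd, hS.add_fth] at e₂ e₃
  simp only [hS.swap_fst_snd y x, (hS.swap_snd_thd · y x), (hS.swap_thd_fth · · y x)] at e₃
  linear_combination (5 / 6 : K) * e₁ - (1 / 12 : K) * e₂ - (1 / 12 : K) * e₃

theorem eq_zero_of_diag (hS : IsSymmQuadriadditive S) (h : ∀ x, S x x x x = 0) (x y z w : M) :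
    S x y z w = 0 := by
  have h₁ (x y z : M) : S x y z z = 0 := by
    have e := hS.eq_zero_of_diag_pair h (x + y) z
    simp only [hS.add_fst, hS.add_snd, hS.swap_fst_snd y x, hS.eq_zero_of_diag_pair h] at e
    linear_combination e / 2
  have e := h₁ x y (z + w)
  simp only [hS.add_thd, hS.add_fth, hS.swap_thd_fth x y w z, h₁] at e
  linear_combination e / 2

end IsSymmQuadriadditive

section SumOfPairings

variable {R K : Type*} [CommSemiring R] [Field K] [CharZero K]

theorem sum_pairings_eq {B : R → R → K} {a : R → K} (hB_symm : ∀ x y, B x y = B y x)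
    (hB_add : ∀ x y z, B (x + y) z = B x z + B y z) (ha_add : ∀ x y, a (x + y) = a x + a y)
    (hdiag : ∀ x, B (x ^ 2) (x ^ 2) = a x ^ 4) (x y z w : R) :
    B (x * y) (z * w) + B (x * z) (y * w) + B (x * w) (y * z) = 3 * (a x * a y * a z * a w) := by
  have hS : IsSymmQuadriadditive fun x y z w =>
      B (x * y) (z * w) + B (x * z) (y * w) + B (x * w) (y * z) - 3 * (a x * a y * a z * a w) := by
    refine ⟨fun x x' y z w => ?_, fun x y z w => ?_, fun x y z w => ?_, fun x y z w => ?_⟩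
    · simp only [add_mul, hB_add, ha_add]
      ring
    · rw [mul_comm y x, hB_symm (y * z), hB_symm (y * w)]
      ring
    · rw [mul_comm z y]
      ring
    · rw [mul_comm w z]
      ring
  have := hS.eq_zero_of_diag (fun x => by simp only [← sq, hdiag]; ring) x y z w
  linear_combination this

end SumOfPairings

section QuarticIdentity

variable {R K : Type*} [CommMonoid R] [Field K] [CharZero K] {B : R → R → K} {a : R → K}

theorem two_mul_eq_of_sum_pairings
    (h : ∀ x y z w, B (x * y) (z * w) + B (x * z) (y * w) + B (x * w) (y * z) =
      3 * (a x * a y * a z * a w)) (u v : R) :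
    2 * B u v = 3 * a 1 ^ 2 * (a u * a v) - a 1 ^ 3 * a (u * v) := by
  have h₁ := h (u * v) 1 1 1
  have h₂ := h u v 1 1
  simp only [mul_one] at h₁ h₂
  linear_combination h₂ - h₁ / 3

theorem quartic_identity_of_sum_pairings
    (h : ∀ x y z w, B (x * y) (z * w) + B (x * z) (y * w) + B (x * w) (y * z) =
      3 * (a x * a y * a z * a w)) (x y z w : R) :
    a 1 ^ 2 * (a (x * y) * a (z * w) + a (x * z) * a (y * w) + a (x * w) * a (y * z)) -
      a 1 ^ 3 * a (x * y * (z * w)) = 2 * (a x * a y * a z * a w) := by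
  have t₁ := two_mul_eq_of_sum_pairings h (x * y) (z * w)
  have t₂ := two_mul_eq_of_sum_pairings h (x * z) (y * w)
  have t₃ := two_mul_eq_of_sum_pairings h (x * w) (y * z)
  rw [mul_mul_mul_comm x z y w] at t₂
  rw [mul_mul_mul_comm x w y z, mul_comm w z] at t₃
  linear_combination (2 * h x y z w - t₁ - t₂ - t₃) / 3

theorem map_one_mul_map_mul_of_quartic_identity
    (h : ∀ x y z w, a 1 ^ 2 * (a (x * y) * a (z * w) + a (x * z) * a (y * w) + a (x * w) * a (y * z)) -
      a 1 ^ 3 * a (x * y * (z * w)) = 2 * (a x * a y * a z * a w)) (x y : R) :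
    a 1 * a (x * y) = a x * a y := by
  rcases eq_or_ne (a 1) 0 with hc | hc
  · have hxy := h x x y y
    rw [hc] at hxy
    have hsq : (a x * a y) ^ 2 = 0 := by linear_combination -hxy / 2
    rw [hc, zero_mul, eq_comm]
    exact pow_eq_zero_iff two_ne_zero |>.mp hsq
  · have h₁ := h x x y y
    have h₂ := h (x * x) y y 1
    have h₃ := h x x y 1
    simp only [mul_one, ← mul_assoc] at h₁ h₂ h₃
    have hsq : a 1 * (a 1 * a (x * y) - a x * a y) ^ 2 = 0 := by
      linear_combination (a 1 * h₁ - a 1 * h₂ - 2 * a y * h₃) / 2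
    rw [← sub_eq_zero]
    exact pow_eq_zero_iff two_ne_zero |>.mp ((mul_eq_zero.mp hsq).resolve_left hc)

theorem eq_mul_of_sum_pairings
    (h : ∀ x y z w, B (x * y) (z * w) + B (x * z) (y * w) + B (x * w) (y * z) =
      3 * (a x * a y * a z * a w)) (x y : R) :
    B x y = a 1 ^ 2 * (a x * a y) := by
  have hmul := map_one_mul_map_mul_of_quartic_identity (quartic_identity_of_sum_pairings h) x y
  linear_combination (two_mul_eq_of_sum_pairings h x y - a 1 ^ 2 * hmul) / 2

end QuarticIdentity

theorem stmt14_general (F : Type*) [Field F] (F₂ : F → F → ℂ)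
    (hsymm : ∀ x y : F, F₂ x y = F₂ y x)
    (haddB : ∀ x y z : F, F₂ (x + y) z = F₂ x z + F₂ y z)
    (f : F → ℂ) (hf : ∀ x, f x = F₂ x x)
    (a : F → ℂ) (hadd : ∀ x y : F, a (x + y) = a x + a y)
    (heq : ∀ x : F, f (x ^ 2) = a x ^ 4) :
    ∃ φ : F → ℂ,
      (∀ x y : F, φ (x + y) = φ x + φ y) ∧ (∀ x y : F, φ (x * y) = φ x * φ y) ∧
      (∀ x : F, a x = a 1 * φ x) ∧ (∀ x : F, f x = a 1 ^ 4 * φ x ^ 2) := by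
  have hpair := sum_pairings_eq hsymm haddB hadd fun x => by rw [← hf, heq]
  have hmul := map_one_mul_map_mul_of_quartic_identity (quartic_identity_of_sum_pairings hpair)
  have hF₂ := eq_mul_of_sum_pairings hpair
  rcases eq_or_ne (a 1) 0 with hc | hc
  · have ha (x : F) : a x = 0 := by
      rw [← sq_eq_zero_iff, sq, ← hmul, hc, zero_mul]
    exact ⟨0, by simp, by simp, by simp [ha], by simp [hf, hF₂, ha]⟩
  · refine ⟨fun x => a x / a 1, fun x y => by simp only [hadd, add_div], fun x y => ?_,
      fun x => by field_simp, fun x => ?_⟩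
    · field_simp
      linear_combination hmul x y
    · rw [hf, hF₂]
      field_simp

theorem stmt14 (F : Type*) [Field F] [CharZero F] (F₂ : F → F → ℂ)
    (hsymm : ∀ x y : F, F₂ x y = F₂ y x)
    (haddB : ∀ x y z : F, F₂ (x + y) z = F₂ x z + F₂ y z)
    (f : F → ℂ) (hf : ∀ x, f x = F₂ x x)
    (a : F → ℂ) (hadd : ∀ x y : F, a (x + y) = a x + a y)
    (heq : ∀ x : F, f (x ^ 2) = a x ^ 4) :
    ∃ φ : F → ℂ,
      (∀ x y : F, φ (x + y) = φ x + φ y) ∧ (∀ x y : F, φ (x * y) = φ x * φ y) ∧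
      (∀ x : F, a x = a 1 * φ x) ∧ (∀ x : F, f x = a 1 ^ 4 * φ x ^ 2) :=
  stmt14_general F F₂ hsymm haddB f hf a hadd heq
end

section
/- Let F be a field of characteristic zero, f : F → ℂ a quadratic function and a : F → ℂ additive with f(x²) = a(x)⁴ for all x ∈ F. If F₂ denotes the symmetric bi-additive function with f(x) = F₂(x,x), then f(1) = a(1)⁴, F₂(x,1) = a(1)³ a(x) for all x, and f(x) = (3/2) a(1)² a(x)² − (1/2) a(1)³ a(x²) for all x ∈ F. -/
theorem stmt15 (F : Type*) [Field F] [CharZero F] (F₂ : F → F → ℂ)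
    (hsymm : ∀ x y : F, F₂ x y = F₂ y x)
    (haddB : ∀ x y z : F, F₂ (x + y) z = F₂ x z + F₂ y z)
    (f : F → ℂ) (hf : ∀ x, f x = F₂ x x)
    (a : F → ℂ) (hadd : ∀ x y : F, a (x + y) = a x + a y)
    (heq : ∀ x : F, f (x ^ 2) = a x ^ 4) :
    f 1 = a 1 ^ 4 ∧ (∀ x : F, F₂ x 1 = a 1 ^ 3 * a x) ∧
      ∀ x : F, f x = 3 / 2 * a 1 ^ 2 * a x ^ 2 - 1 / 2 * a 1 ^ 3 * a (x ^ 2) := by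
  have hadd' : ∀ x y z : F, F₂ x (y + z) = F₂ x y + F₂ x z := by
    intro x y z
    rw [hsymm, haddB, hsymm y x, hsymm z x]
  have hq : ∀ x : F, F₂ x 1 = a 1 ^ 3 * a x := by
    intro x
    have e1 := heq (x + 1)
    have e2 := heq (x + 1 + 1)
    have e3 := heq (x + 1 + 1 + 1)
    have h0 := heq x
    have h1 := heq 1
    rw [hf] at e1 e2 e3 h0 h1
    rw [show (x + 1 : F) ^ 2 = x ^ 2 + x + x + 1 from by ring] at e1
    rw [show (x + 1 + 1 : F) ^ 2 = x ^ 2 + x + x + x + x + 1 + 1 + 1 + 1 from by ring] at e2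
    rw [show (x + 1 + 1 + 1 : F) ^ 2
        = x ^ 2 + x + x + x + x + x + x + 1 + 1 + 1 + 1 + 1 + 1 + 1 + 1 + 1 from by ring] at e3
    rw [one_pow] at h1
    simp only [haddB, hadd', hadd] at e1 e2 e3
    simp only [hsymm 1 x, hsymm 1 (x ^ 2), hsymm x (x ^ 2)] at e1 e2 e3
    linear_combination (1/8) * e1 - (1/8) * e2 + (1/24) * e3 - (1/24) * h0 - (3/2) * h1
  refine ⟨by rw [← one_pow 2, heq, one_pow], hq, ?_⟩
  intro x
  have e1 := heq (x + 1)
  have e2 := heq (x + 1 + 1)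
  have h0 := heq x
  have h1 := heq 1
  rw [hf] at e1 e2 h0 h1
  rw [show (x + 1 : F) ^ 2 = x ^ 2 + x + x + 1 from by ring] at e1
  rw [show (x + 1 + 1 : F) ^ 2 = x ^ 2 + x + x + x + x + 1 + 1 + 1 + 1 from by ring] at e2
  rw [one_pow] at h1
  simp only [haddB, hadd', hadd] at e1 e2
  simp only [hsymm 1 x, hsymm 1 (x ^ 2), hsymm x (x ^ 2)] at e1 e2
  rw [hf]
  linear_combination (1/8) * e2 - (1/4) * e1 + (1/8) * h0 - (7/4) * h1
    - 3 * hq x - (1/2) * hq (x ^ 2)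
end
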